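/- arXiv:2103.11234 — 3 statements merged into one kernel-verified Lean document; each statement's English description precedes it below -/
import Mathlib

section
/- The vector field K₄ = λ²y∂x − x∂y − (1/2)(λ²y² − x²)∂z is a Killing vector field for the metric g = (1/λ²)dx² + dy² + (x dy + dz)² on ℝ³. -/
/-!
Adding the Koszul formulas for `g(∇_X K, Y)` and `g(∇_Y K, X)`, everything cancels except
`(L_K g)(X, Y) = K(g(X, Y)) - g([K, X], Y) - g(X, [K, Y])`. Expanding `K(g(X, Y))` by the product
rule, the derivatives of `X` and `Y` cancel against the brackets, leaving the tensorial expression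
`(∂_K g)(X, Y) + g(DK·X, Y) + g(X, DK·Y)`. For `K₄` this is a polynomial identity in the
components, in which the `λ²` of `K₄`'s `∂x`-component cancels the `1/λ²` of `g`.
-/

noncomputable section

/-- The Heisenberg metric g = (1/λ²)dx² + dy² + (x dy + dz)². -/
def gH (l : ℝ) (p v w : ℝ × ℝ × ℝ) : ℝ :=
  (1 / l ^ 2) * v.1 * w.1 + v.2.1 * w.2.1 +
    (p.1 * v.2.1 + v.2.2) * (p.1 * w.2.1 + w.2.2)

/-- Lie bracket of vector fields on ℝ³. -/
def bracket (X Y : ℝ × ℝ × ℝ → ℝ × ℝ × ℝ) : ℝ × ℝ × ℝ → ℝ × ℝ × ℝ :=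
  fun p => fderiv ℝ Y p (X p) - fderiv ℝ X p (Y p)

/-- The function p ↦ g_p(X p, Y p). -/
def gf (l : ℝ) (X Y : ℝ × ℝ × ℝ → ℝ × ℝ × ℝ) (p : ℝ × ℝ × ℝ) : ℝ :=
  gH l p (X p) (Y p)

/-- Directional derivative of a function along a vector field: (X·f)(p). -/
def dirD (X : ℝ × ℝ × ℝ → ℝ × ℝ × ℝ) (f : ℝ × ℝ × ℝ → ℝ) (p : ℝ × ℝ × ℝ) : ℝ :=
  fderiv ℝ f p (X p)

/-- The Koszul expression, equal to 2g(∇_X Y, Z) for the Levi-Civita connection ∇. -/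
def koszul (l : ℝ) (X Y Z : ℝ × ℝ × ℝ → ℝ × ℝ × ℝ) (p : ℝ × ℝ × ℝ) : ℝ :=
  dirD X (gf l Y Z) p + dirD Y (gf l X Z) p - dirD Z (gf l X Y) p
    + gf l (bracket X Y) Z p - gf l (bracket X Z) Y p - gf l (bracket Y Z) X p

/-- g(∇_X Y, Z), via the Koszul formula for the Levi-Civita connection of g. -/
def covInner (l : ℝ) (X Y Z : ℝ × ℝ × ℝ → ℝ × ℝ × ℝ) (p : ℝ × ℝ × ℝ) : ℝ :=
  (1 / 2) * koszul l X Y Z p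

/-- The Killing vector field K₄ = λ²y∂x − x∂y − (1/2)(λ²y² − x²)∂z. -/
def K4 (l : ℝ) : ℝ × ℝ × ℝ → ℝ × ℝ × ℝ :=
  fun p => (l ^ 2 * p.2.1, -p.1, -(1 / 2) * (l ^ 2 * p.2.1 ^ 2 - p.1 ^ 2))

section

variable {l : ℝ}

theorem gH_comm (p v w : ℝ × ℝ × ℝ) : gH l p v w = gH l p w v := by
  simp only [gH]; ring

theorem gH_sub_left (p u v w : ℝ × ℝ × ℝ) : gH l p (u - v) w = gH l p u w - gH l p v w := by
  simp only [gH, Prod.fst_sub, Prod.snd_sub]; ring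

theorem gH_sub_right (p u v w : ℝ × ℝ × ℝ) : gH l p u (v - w) = gH l p u v - gH l p u w := by
  rw [gH_comm, gH_sub_left, gH_comm p v, gH_comm p w]

def lieDerivMetric (l : ℝ) (K X Y : ℝ × ℝ × ℝ → ℝ × ℝ × ℝ) (p : ℝ × ℝ × ℝ) : ℝ :=
  dirD K (gf l X Y) p - gf l (bracket K X) Y p - gf l X (bracket K Y) p

theorem covInner_add_covInner_eq_lieDerivMetric (K X Y : ℝ × ℝ × ℝ → ℝ × ℝ × ℝ) (p : ℝ × ℝ × ℝ) :
    covInner l X K Y p + covInner l Y K X p = lieDerivMetric l K X Y p := by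
  have hg : ∀ Z W : ℝ × ℝ × ℝ → ℝ × ℝ × ℝ, gf l Z W = gf l W Z := fun Z W =>
    funext fun q => gH_comm q (Z q) (W q)
  have hbr : ∀ Z W V : ℝ × ℝ × ℝ → ℝ × ℝ × ℝ,
      gf l (bracket Z W) V p = -gf l (bracket W Z) V p := fun Z W V => by
    simp only [gf, bracket, ← neg_sub (fderiv ℝ Z p (W p)), gH, Prod.fst_neg, Prod.snd_neg]; ring
  simp only [covInner, koszul, lieDerivMetric]
  rw [hg X K, hg Y K, hg Y X, hbr X K, hbr Y K, hbr Y X, hg X (bracket K Y)]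
  ring

/-- Derivative of `q ↦ g_q(v, w)` at `p` in the direction `u` (only `q.1` enters `g_q`). -/
def gHDeriv (p u v w : ℝ × ℝ × ℝ) : ℝ :=
  u.1 * (v.2.1 * (p.1 * w.2.1 + w.2.2) + (p.1 * v.2.1 + v.2.2) * w.2.1)

theorem dirD_gf {X Y : ℝ × ℝ × ℝ → ℝ × ℝ × ℝ} {p : ℝ × ℝ × ℝ}
    (hX : DifferentiableAt ℝ X p) (hY : DifferentiableAt ℝ Y p) (K : ℝ × ℝ × ℝ → ℝ × ℝ × ℝ) :
    dirD K (gf l X Y) p = gHDeriv p (K p) (X p) (Y p)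
      + gH l p (fderiv ℝ X p (K p)) (Y p) + gH l p (X p) (fderiv ℝ Y p (K p)) := by
  have hx := hX.hasFDerivAt
  have hy := hY.hasFDerivAt
  have hp : HasFDerivAt (fun q : ℝ × ℝ × ℝ => q.1) (ContinuousLinearMap.fst ℝ ℝ (ℝ × ℝ)) p :=
    hasFDerivAt_fst
  have hgf : HasFDerivAt (gf l X Y) _ p :=
    (((hx.fst.const_mul (1 / l ^ 2)).mul hy.fst).add (hx.snd.fst.mul hy.snd.fst)).add
      (((hp.mul hx.snd.fst).add hx.snd.snd).mul ((hp.mul hy.snd.fst).add hy.snd.snd))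
  simp only [dirD, hgf.fderiv, one_div, Pi.add_apply, Pi.mul_apply, smul_add, add_apply,
    smul_apply, ContinuousLinearMap.comp_apply, ContinuousLinearMap.coe_fst',
    ContinuousLinearMap.coe_snd', smul_eq_mul, gHDeriv, gH]
  ring

theorem lieDerivMetric_eq {X Y : ℝ × ℝ × ℝ → ℝ × ℝ × ℝ} {p : ℝ × ℝ × ℝ}
    (hX : DifferentiableAt ℝ X p) (hY : DifferentiableAt ℝ Y p) (K : ℝ × ℝ × ℝ → ℝ × ℝ × ℝ) :
    lieDerivMetric l K X Y p = gHDeriv p (K p) (X p) (Y p)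
      + gH l p (fderiv ℝ K p (X p)) (Y p) + gH l p (X p) (fderiv ℝ K p (Y p)) := by
  simp only [lieDerivMetric, dirD_gf hX hY, gf, bracket, gH_sub_left, gH_sub_right]
  ring

end

theorem fderiv_K4_apply (l : ℝ) (p v : ℝ × ℝ × ℝ) :
    fderiv ℝ (K4 l) p v = (l ^ 2 * v.2.1, -v.1, -(l ^ 2 * p.2.1 * v.2.1 - p.1 * v.1)) := by
  have hx : HasFDerivAt (fun q : ℝ × ℝ × ℝ => q.1) (ContinuousLinearMap.fst ℝ ℝ (ℝ × ℝ)) p :=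
    hasFDerivAt_fst
  have hy := (hasFDerivAt_snd (𝕜 := ℝ) (p := p)).fst
  have hK : HasFDerivAt (K4 l) _ p := (hy.const_mul (l ^ 2)).prodMk (hx.neg.prodMk
    ((((hy.pow 2).const_mul (l ^ 2)).sub (hx.pow 2)).const_mul (-(1 / 2))))
  simp only [hK.fderiv, ContinuousLinearMap.prod_apply, smul_apply,
    sub_apply, neg_apply, ContinuousLinearMap.comp_apply,
    ContinuousLinearMap.coe_fst', ContinuousLinearMap.coe_snd', smul_eq_mul, Prod.mk.injEq, true_and]
  ring

theorem killing_equation_K4 {l : ℝ} (hl : l ≠ 0) (p v w : ℝ × ℝ × ℝ) :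
    gHDeriv p (K4 l p) v w + gH l p (fderiv ℝ (K4 l) p v) w + gH l p v (fderiv ℝ (K4 l) p w)
      = 0 := by
  simp only [fderiv_K4_apply, gHDeriv, gH, K4]
  field_simp
  ring

/-- K₄ is a Killing field of g: g(∇_X K₄, Y) + g(∇_Y K₄, X) = 0
for all (smooth) vector fields X, Y. -/
theorem K4_killing (l : ℝ) (hl : 0 < l)
    (X Y : ℝ × ℝ × ℝ → ℝ × ℝ × ℝ)
    (hX : ContDiff ℝ (⊤ : ℕ∞) X) (hY : ContDiff ℝ (⊤ : ℕ∞) Y) (p : ℝ × ℝ × ℝ) :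
    covInner l X (K4 l) Y p + covInner l Y (K4 l) X p = 0 := by
  rw [covInner_add_covInner_eq_lieDerivMetric, lieDerivMetric_eq (hX.differentiable (by simp) p)
    (hY.differentiable (by simp) p)]
  exact killing_equation_K4 hl.ne' p (X p) (Y p)
end
end

section
/- For real constants c, c₁, c₂, c₃, c₄, c₅ with c ≠ 0, the curve γ(t) = (x(t), y(t), z(t)) with x(t) = −(c₁/c)e^{cλt} − (c₂/c)e^{−cλt} + c₃, y(t) = (c₁/(cλ))e^{cλt} − (c₂/(cλ))e^{−cλt} + c₄ satisfies x″ + λ²y′(z′ + xy′) = 0 and y″ + x′(z′ + xy′) = 0 whenever z is chosen so that z′ + xy′ ≡ c on ℝ; equivalently, any curve with these x, y components and z′ = c − xy′ is a geodesic of the metric g = (1/λ²)dx² + dy² + (x dy + dz)² on ℝ³. -/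
/-!
Along the curve `z′ + xy′ ≡ c`, so the geodesic equations reduce to the linear system
`y″ = -c x′`, `x″ = -λ²c y′`. Up to constants, `x` and `y` are combinations of `e^{cλt}` and
`e^{-cλt}`, a family closed under differentiation, and the system is checked coefficientwise.
-/

open Real

noncomputable def expPair (k A B t : ℝ) : ℝ := A * exp (k * t) + B * exp (-(k * t))

theorem hasDerivAt_expPair (k A B t : ℝ) :
    HasDerivAt (expPair k A B) (expPair k (k * A) (-(k * B)) t) t := by
  have hpos : HasDerivAt (fun t => exp (k * t)) (exp (k * t) * k) t := by
    simpa using ((hasDerivAt_id t).const_mul k).exp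
  have hneg : HasDerivAt (fun t => exp (-(k * t))) (exp (-(k * t)) * -k) t := by
    simpa using ((hasDerivAt_id t).const_mul k).neg.exp
  exact ((hpos.const_mul A).add (hneg.const_mul B)).congr_deriv (by rw [expPair]; ring)

theorem deriv_expPair (k A B : ℝ) : deriv (expPair k A B) = expPair k (k * A) (-(k * B)) :=
  funext fun t => (hasDerivAt_expPair k A B t).deriv

theorem deriv_expPair_add_const (k A B C : ℝ) :
    deriv (fun t => expPair k A B t + C) = expPair k (k * A) (-(k * B)) :=
  funext fun t => by rw [deriv_add_const, deriv_expPair]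

theorem stmt9_general (l c c₁ c₂ c₃ c₄ : ℝ)
    (x y z : ℝ → ℝ)
    (hx : x = fun t => -(c₁ / c) * Real.exp (c * l * t)
      - (c₂ / c) * Real.exp (-(c * l * t)) + c₃)
    (hy : y = fun t => (c₁ / (c * l)) * Real.exp (c * l * t)
      - (c₂ / (c * l)) * Real.exp (-(c * l * t)) + c₄)
    (hz : ∀ t, deriv z t = c - x t * deriv y t) :
    (∀ t, deriv (deriv y) t + deriv x t * (deriv z t + x t * deriv y t) = 0) ∧
    (∀ t, deriv (deriv x) t + l ^ 2 * deriv y t * (deriv z t + x t * deriv y t) = 0) ∧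
    (∀ t, deriv (fun s => deriv z s + x s * deriv y s) t = 0) := by
  have hx' : x = fun t => expPair (c * l) (-(c₁ / c)) (-(c₂ / c)) t + c₃ := by
    subst hx; funext t; simp only [expPair]; ring
  have hy' : y = fun t => expPair (c * l) (c₁ / (c * l)) (-(c₂ / (c * l))) t + c₄ := by
    subst hy; funext t; simp only [expPair]; ring
  have hconserved : (fun s => deriv z s + x s * deriv y s) = fun _ => c :=
    funext fun s => by rw [hz s]; ring
  have hconserved_at (t : ℝ) : deriv z t + x t * deriv y t = c := congrFun hconserved t
  refine ⟨fun t => ?_, fun t => ?_, fun t => by rw [hconserved, deriv_const]⟩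
  all_goals
    rw [hconserved_at t, hx', hy', deriv_expPair_add_const, deriv_expPair_add_const,
      deriv_expPair]
    simp only [expPair]
    field_simp
    ring

/-- For c ≠ 0, the curve with x(t) = −(c₁/c)e^{cλt} − (c₂/c)e^{−cλt} + c₃,
y(t) = (c₁/(cλ))e^{cλt} − (c₂/(cλ))e^{−cλt} + c₄ and any z with
z′ = c − xy′ (i.e. z′ + xy′ ≡ c) is a geodesic of the Heisenberg metric:
y″ + x′(z′ + xy′) = 0, x″ + λ²y′(z′ + xy′) = 0 and (z′ + xy′)′ = 0. -/
theorem stmt9 (l c c₁ c₂ c₃ c₄ : ℝ) (hl : 0 < l) (hc : c ≠ 0)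
    (x y z : ℝ → ℝ)
    (hx : x = fun t => -(c₁ / c) * Real.exp (c * l * t)
      - (c₂ / c) * Real.exp (-(c * l * t)) + c₃)
    (hy : y = fun t => (c₁ / (c * l)) * Real.exp (c * l * t)
      - (c₂ / (c * l)) * Real.exp (-(c * l * t)) + c₄)
    (hz : ∀ t, deriv z t = c - x t * deriv y t) :
    (∀ t, deriv (deriv y) t + deriv x t * (deriv z t + x t * deriv y t) = 0) ∧
    (∀ t, deriv (deriv x) t + l ^ 2 * deriv y t * (deriv z t + x t * deriv y t) = 0) ∧
    (∀ t, deriv (fun s => deriv z s + x s * deriv y s) t = 0) :=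
  stmt9_general l c c₁ c₂ c₃ c₄ x y z hx hy hz
end

section
/- For real constants c₁,…,c₅, the curve γ(t) with x(t) = c₁t + c₂, y(t) = −(c₁/λ)t² + c₃t + c₄, z(t) = (2c₁²/(3λ))t³ + c₁(c₂/λ − c₃/2)t² + (1/λ − c₂c₃)t + c₅ satisfies the K₁-magnetic system: y″ + x′((z′+xy′) + 1/λ) = 0, x″ + y′(λ²(z′+xy′) − λ) = 0, and z′ + xy′ = 1/λ identically. -/
noncomputable section

/-! Along the curve the first integral `z′ + x y′` equals `1/λ`, so the system reduces to
`y″ = -2x′/λ` and `x″ = 0`, which hold because `x` is affine with slope `c₁` and `y` is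
quadratic with leading coefficient `-c₁/λ`. -/

section Polynomials

variable {𝕜 : Type*} [NontriviallyNormedField 𝕜]

theorem deriv_affine (a b : 𝕜) : deriv (fun t => a * t + b) = fun _ => a := by
  ext t
  simp

theorem deriv_quadratic (a b c : 𝕜) :
    deriv (fun t => a * t ^ 2 + b * t + c) = fun t => 2 * a * t + b := by
  ext t
  have h := (((hasDerivAt_pow 2 t).const_mul a).add ((hasDerivAt_id t).const_mul b)).add_const c
  refine h.deriv.trans ?_
  simp only [Nat.cast_ofNat]
  ring

theorem deriv_cubic (a b c d : 𝕜) :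
    deriv (fun t => a * t ^ 3 + b * t ^ 2 + c * t + d) =
      fun t => 3 * a * t ^ 2 + 2 * b * t + c := by
  ext t
  have h := ((((hasDerivAt_pow 3 t).const_mul a).add ((hasDerivAt_pow 2 t).const_mul b)).add
    ((hasDerivAt_id t).const_mul c)).add_const d
  refine h.deriv.trans ?_
  simp only [Nat.cast_ofNat]
  ring

end Polynomials

theorem stmt11_general (l c₁ c₂ c₃ c₄ c₅ : ℝ)
    (x y z : ℝ → ℝ)
    (hx : x = fun t => c₁ * t + c₂)
    (hy : y = fun t => -(c₁ / l) * t ^ 2 + c₃ * t + c₄)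
    (hz : z = fun t => (2 * c₁ ^ 2 / (3 * l)) * t ^ 3
      + c₁ * (c₂ / l - c₃ / 2) * t ^ 2 + (1 / l - c₂ * c₃) * t + c₅) :
    (∀ t, deriv (deriv y) t
      + deriv x t * ((deriv z t + x t * deriv y t) + 1 / l) = 0) ∧
    (∀ t, deriv (deriv x) t
      + deriv y t * (l ^ 2 * (deriv z t + x t * deriv y t) - l) = 0) ∧
    (∀ t, deriv z t + x t * deriv y t = 1 / l) := by
  have dx : deriv x = fun _ => c₁ := hx ▸ deriv_affine c₁ c₂
  have dy : deriv y = fun t => 2 * -(c₁ / l) * t + c₃ := hy ▸ deriv_quadratic _ c₃ c₄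
  have dz := hz ▸ deriv_cubic _ _ (1 / l - c₂ * c₃) c₅
  have ddx : deriv (deriv x) = fun _ => 0 := by simp [dx]
  have ddy : deriv (deriv y) = fun _ => 2 * -(c₁ / l) := dy ▸ deriv_affine _ c₃
  have first_integral : ∀ t, deriv z t + x t * deriv y t = 1 / l := by
    intro t
    simp only [dz, dy, hx]
    ring
  refine ⟨fun t => ?_, fun t => ?_, first_integral⟩
  · rw [first_integral t, ddy, dx]
    ring
  · -- `λ² · λ⁻¹ = λ` holds also at `λ = 0`, where both sides vanish.
    rw [first_integral t, ddx, one_div, sq, mul_self_mul_inv]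
    ring

/-- The curve with x(t) = c₁t + c₂, y(t) = −(c₁/λ)t² + c₃t + c₄,
z(t) = (2c₁²/(3λ))t³ + c₁(c₂/λ − c₃/2)t² + (1/λ − c₂c₃)t + c₅ satisfies the
K₁-magnetic system y″ + x′((z′+xy′) + 1/λ) = 0, x″ + y′(λ²(z′+xy′) − λ) = 0,
and z′ + xy′ = 1/λ identically. -/
theorem stmt11 (l c₁ c₂ c₃ c₄ c₅ : ℝ) (hl : 0 < l)
    (x y z : ℝ → ℝ)
    (hx : x = fun t => c₁ * t + c₂)
    (hy : y = fun t => -(c₁ / l) * t ^ 2 + c₃ * t + c₄)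
    (hz : z = fun t => (2 * c₁ ^ 2 / (3 * l)) * t ^ 3
      + c₁ * (c₂ / l - c₃ / 2) * t ^ 2 + (1 / l - c₂ * c₃) * t + c₅) :
    (∀ t, deriv (deriv y) t
      + deriv x t * ((deriv z t + x t * deriv y t) + 1 / l) = 0) ∧
    (∀ t, deriv (deriv x) t
      + deriv y t * (l ^ 2 * (deriv z t + x t * deriv y t) - l) = 0) ∧
    (∀ t, deriv z t + x t * deriv y t = 1 / l) :=
  stmt11_general l c₁ c₂ c₃ c₄ c₅ x y z hx hy hz
end
end
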